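/- arXiv:2001.11943 — 3 statements merged into one kernel-verified Lean document; each statement's English description precedes it below -/
import Mathlib

section
/- Let A : ZMod(8g−4) → Bool be any function, and call an index i 'Type 2' if A(σ(i)) = true and A(i+2) = false. Then it is impossible that i + 4gn is Type 2 for all integers n ≥ 0. (Key step: if i + 4gn is Type 2 for all n ≥ 0, then no i + 4gn is divisible by 2g−1, since σ(j) ≡ j+2 mod 8g−4 for multiples j of 2g−1 would force A(σ(j)) = A(j+2), a contradiction; but some i + 4gn is always divisible by 2g−1.) -/
/-- The side-pairing map `σ` on residues mod `8g-4`: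
`σ(i) = 4g - i` if `i` is odd, `σ(i) = 2 - i` if `i` is even. -/
def sigmaMap (g : ℕ) (i : ZMod (8*g-4)) : ZMod (8*g-4) :=
  if i.val % 2 = 0 then 2 - i else 4*(g : ZMod (8*g-4)) - i

/-- The map `τ(i) = i + (4g-2)` mod `8g-4`. -/
def tauMap (g : ℕ) (i : ZMod (8*g-4)) : ZMod (8*g-4) :=
  i + (4*(g : ZMod (8*g-4)) - 2)

/-- Type 1: `A(σ(i)) = P` and `A(i+2) = P`. -/
def IsType1 (g : ℕ) (A : ZMod (8*g-4) → Bool) (i : ZMod (8*g-4)) : Prop :=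
  A (sigmaMap g i) = true ∧ A (i + 2) = true

/-- Type 2: `A(σ(i)) = P` and `A(i+2) = Q`. -/
def IsType2 (g : ℕ) (A : ZMod (8*g-4) → Bool) (i : ZMod (8*g-4)) : Prop :=
  A (sigmaMap g i) = true ∧ A (i + 2) = false

/-- Type 3: `A(σ(i)) = Q` and `A(τ(i)) = Q`. -/
def IsType3 (g : ℕ) (A : ZMod (8*g-4) → Bool) (i : ZMod (8*g-4)) : Prop :=
  A (sigmaMap g i) = false ∧ A (tauMap g i) = false

/-- Type 4: `A(σ(i)) = Q` and `A(τ(i)) = P`. -/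
def IsType4 (g : ℕ) (A : ZMod (8*g-4) → Bool) (i : ZMod (8*g-4)) : Prop :=
  A (sigmaMap g i) = false ∧ A (tauMap g i) = true

theorem not_forall_type2 (g : ℕ) (hg : 2 ≤ g) (A : ZMod (8*g-4) → Bool)
    (i : ZMod (8*g-4)) :
    ¬ (∀ n : ℕ, IsType2 g A (i + ((4*g*n : ℕ) : ZMod (8*g-4)))) := by
  intro h
  haveI : NeZero (8*g-4) := ⟨by omega⟩
  set t := (2*g-1) - i.val % (2*g-1) with ht
  set n := g * t with hn
  have hr : i.val % (2*g-1) < 2*g-1 := Nat.mod_lt _ (by omega)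
  have htr : t + i.val % (2*g-1) = 2*g-1 := by omega
  obtain ⟨q, hq⟩ : ∃ q, i.val = (2*g-1) * q + i.val % (2*g-1) :=
    ⟨i.val / (2*g-1), (Nat.div_add_mod _ _).symm ▸ rfl⟩
  have key : (2*g-1) ∣ (i.val + 4*g*n) := by
    refine ⟨q + 1 + (2*g+1)*t, ?_⟩
    rw [hn]
    zify [show 1 ≤ 2*g by omega] at hq htr ⊢
    linear_combination hq + htr
  set j := i + ((4*g*n : ℕ) : ZMod (8*g-4)) with hj
  have hdm : (2*g-1) ∣ (8*g-4) := ⟨4, by omega⟩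
  have hjv : (2*g-1) ∣ j.val := by
    have h1 : j.val ≡ i.val + 4*g*n [MOD 2*g-1] := by
      rw [hj, ZMod.val_add, ZMod.val_natCast]
      calc (i.val + 4*g*n % (8*g-4)) % (8*g-4)
          ≡ i.val + 4*g*n % (8*g-4) [MOD 2*g-1] := (Nat.mod_modEq _ _).of_dvd hdm
        _ ≡ i.val + 4*g*n [MOD 2*g-1] :=
            Nat.ModEq.add_left _ ((Nat.mod_modEq _ _).of_dvd hdm)
    exact (Nat.modEq_zero_iff_dvd).mp (h1.trans ((Nat.modEq_zero_iff_dvd).mpr key))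
  obtain ⟨k, hk⟩ := hjv
  have hjlt : j.val < 8*g-4 := ZMod.val_lt j
  have hk4 : k < 4 := by
    by_contra hc
    push_neg at hc
    have : (2*g-1)*4 ≤ (2*g-1)*k := Nat.mul_le_mul_left _ hc
    omega
  have hjcast : ((j.val : ℕ) : ZMod (8*g-4)) = j := ZMod.natCast_rightInverse j
  have hzero : (8 : ZMod (8*g-4)) * (g : ZMod (8*g-4)) - 4 = 0 := by
    have h0 : ((8*g-4 : ℕ) : ZMod (8*g-4)) = 0 := ZMod.natCast_self _
    push_cast [Nat.cast_sub (show 4 ≤ 8*g by omega)] at h0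
    linear_combination h0
  have hj2 : (((2*g-1)*k : ℕ) : ZMod (8*g-4)) = j := by rw [← hk]; exact hjcast
  have hsig : sigmaMap g j = j + 2 := by
    unfold sigmaMap
    interval_cases k
    · rw [if_pos (by omega : j.val % 2 = 0)]
      rw [← hj2]
      push_cast
      ring
    · rw [if_neg (by omega : ¬ j.val % 2 = 0)]
      rw [← hj2]
      push_cast [Nat.cast_sub (show 1 ≤ 2*g by omega)]
      ring
    · rw [if_pos (by omega : j.val % 2 = 0)]
      rw [← hj2]
      push_cast [Nat.cast_sub (show 1 ≤ 2*g by omega)]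
      linear_combination -hzero
    · rw [if_neg (by omega : ¬ j.val % 2 = 0)]
      rw [← hj2]
      push_cast [Nat.cast_sub (show 1 ≤ 2*g by omega)]
      linear_combination -hzero
  obtain ⟨h1, h2⟩ := h n
  rw [hsig] at h1
  exact absurd (h1.symm.trans h2) (by simp)
end

section
/- Let A : ZMod(8g−4) → Bool and call an index i 'Type 4' if A(σ(i)) = false and A(τ(i)) = true. Then it is impossible that i − 4gn is Type 4 for all integers n ≥ 0. -/
lemma cast_eq_neg (g : ℕ) (a b : ℕ) (hab : a + b = 8*g-4) :
    ((a : ℕ) : ZMod (8*g-4)) = -((b : ℕ) : ZMod (8*g-4)) := by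
  apply eq_neg_of_add_eq_zero_left
  rw [← Nat.cast_add, hab, ZMod.natCast_self]

theorem not_forall_type4 (g : ℕ) (hg : 2 ≤ g) (A : ZMod (8*g-4) → Bool)
    (i : ZMod (8*g-4)) :
    ¬ (∀ n : ℕ, IsType4 g A (i - ((4*g*n : ℕ) : ZMod (8*g-4)))) := by
  intro h
  haveI : NeZero (8*g-4) := ⟨by omega⟩
  have hg0 : 8*(g : ZMod (8*g-4)) - 4 = 0 := by
    have := ZMod.natCast_self (8*g-4)
    push_cast [show 4 ≤ 8*g by omega] at this
    linear_combination this
  have hival : ((i.val : ℕ) : ZMod (8*g-4)) = i := by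
    rw [ZMod.natCast_val, ZMod.cast_id]
  set n : ℕ := i.val + 8*g - 5 with hn
  have hcast : ((4*g*n : ℕ) : ZMod (8*g-4)) = 4*(g : ZMod (8*g-4))*(i - 1) := by
    have h5 : ((8*g-5 : ℕ) : ZMod (8*g-4)) = -1 := by
      have := cast_eq_neg g (8*g-5) 1 (by omega)
      simpa using this
    have hnsplit : (n : ℕ) = i.val + (8*g-5) := by omega
    have hsum : (n : ZMod (8*g-4)) = i - 1 := by
      rw [hnsplit, Nat.cast_add, hival, h5]; ring
    push_cast
    rw [hsum]
  obtain ⟨hσ, -⟩ := h 0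
  obtain ⟨-, hτ⟩ := h n
  simp only [Nat.mul_zero, Nat.cast_zero, sub_zero] at hσ
  have heq : tauMap g (i - ((4*g*n : ℕ) : ZMod (8*g-4))) = sigmaMap g i := by
    rw [hcast]
    unfold tauMap sigmaMap
    rcases Nat.even_or_odd i.val with he | ho
    · rw [if_pos (Nat.even_iff.mp he)]
      obtain ⟨m, hm⟩ : ∃ m : ℕ, i - 2 = 2*(m : ZMod (8*g-4)) := by
        refine ⟨(i.val + 8*g - 6)/2, ?_⟩
        have h2 : i - 2 = ((i.val + 8*g - 6 : ℕ) : ZMod (8*g-4)) := by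
          have hsp : (i.val + 8*g - 6 : ℕ) = i.val + (8*g-6) := by omega
          rw [hsp, Nat.cast_add, hival, cast_eq_neg g (8*g-6) 2 (by omega)]
          push_cast; ring
        have hev : (i.val + 8*g - 6 : ℕ) = 2*((i.val + 8*g - 6)/2) := by
          rcases he with ⟨k, hk⟩; omega
        rw [h2]; nth_rewrite 1 [hev]; push_cast; ring
      have hkey : (4*(g : ZMod (8*g-4)) - 2)*(i - 2) = 0 := by
        linear_combination (m : ZMod (8*g-4))*hg0 + (4*(g : ZMod (8*g-4)) - 2)*hm
      linear_combination -hkey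
    · have ho2 := Nat.odd_iff.mp ho
      rw [if_neg (by omega : ¬ i.val % 2 = 0)]
      obtain ⟨m, hm⟩ : ∃ m : ℕ, i - 1 = 2*(m : ZMod (8*g-4)) := by
        refine ⟨(i.val - 1)/2, ?_⟩
        have h1 : (i.val : ℕ) = 1 + 2*((i.val - 1)/2) := by
          rcases ho with ⟨k, hk⟩; omega
        rw [h1] at hival
        push_cast at hival
        linear_combination -hival
      have hkey : (4*(g : ZMod (8*g-4)) - 2)*(i - 1) = 0 := by
        linear_combination (m : ZMod (8*g-4))*hg0 + (4*(g : ZMod (8*g-4)) - 2)*hm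
      linear_combination -hkey
  rw [heq, hσ] at hτ
  exact absurd hτ (by simp)
end

section
/- In a group G with generators T_i satisfying the relations T_{σ(i)} T_i = 1 and T_{ρ³(i)} T_{ρ²(i)} T_{ρ(i)} T_i = 1 for all i (where ρ(i) = σ(i)+1), the two expressions defining U_i agree: T_{σ(i−1)} T_{τ(i)} = T_{σ(i)} T_{τ(i)−1} for all i. -/
/-- The map `ρ(i) = σ(i) + 1` mod `8g-4`. -/
def rhoMap (g : ℕ) (i : ZMod (8*g-4)) : ZMod (8*g-4) :=
  sigmaMap g i + 1

private lemma grp_aux {G : Type*} [Group G] (a b c d x y : G)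
    (h : a*b*c*d = 1) (hx : x*d = 1) (hy : y*c = 1) : a*b = x*y := by
  have hx' : x = d⁻¹ := eq_inv_of_mul_eq_one_left hx
  have hy' : y = c⁻¹ := eq_inv_of_mul_eq_one_left hy
  have h2 : (a*b)*(c*d) = 1 := by rw [← h]; group
  rw [hx', hy', eq_inv_of_mul_eq_one_left h2, mul_inv_rev]

theorem U_two_expressions (g : ℕ) (hg : 2 ≤ g) {G : Type*} [Group G]
    (T : ZMod (8*g-4) → G) (hT : ∀ i, T (sigmaMap g i) * T i = 1)
    (hRel : ∀ i, T (rhoMap g (rhoMap g (rhoMap g i))) * T (rhoMap g (rhoMap g i)) *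
      T (rhoMap g i) * T i = 1) (i : ZMod (8*g-4)) :
    T (sigmaMap g (i - 1)) * T (tauMap g i) = T (sigmaMap g i) * T (tauMap g i - 1) := by
  haveI : NeZero (8*g-4) := ⟨by omega⟩
  have hdvd : (2:ℕ) ∣ 8*g-4 := by omega
  set f : ZMod (8*g-4) →+* ZMod 2 := ZMod.castHom hdvd (ZMod 2) with hfdef
  have hpar : ∀ x : ZMod (8*g-4), (x.val % 2 = 0 ↔ f x = 0) := by
    intro x
    have : f x = (x.val : ZMod 2) := by
      rw [hfdef, ZMod.castHom_apply, ← ZMod.natCast_val]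
    rw [this, ZMod.natCast_eq_zero_iff]
    omega
  have h8 : (8 : ZMod (8*g-4)) * (g : ZMod (8*g-4)) = 4 := by
    have h0 : ((8*g-4 : ℕ) : ZMod (8*g-4)) = 0 := ZMod.natCast_self _
    push_cast [Nat.cast_sub (show 4 ≤ 8*g by omega)] at h0
    linear_combination h0
  have hfg : f (4*(g : ZMod (8*g-4))) = 0 := by
    rw [map_mul, map_natCast]
    have : f 4 = 0 := by rw [map_ofNat]; decide
    rw [this, zero_mul]
  have hcase : f i = 0 ∨ f i = 1 := by
    have : ∀ x : ZMod 2, x = 0 ∨ x = 1 := by decide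
    exact this _
  -- reduce the group-theoretic part
  suffices h : sigmaMap g (i-1) = rhoMap g (rhoMap g (rhoMap g i)) ∧
      tauMap g i = rhoMap g (rhoMap g i) ∧ tauMap g i - 1 = sigmaMap g (rhoMap g i) by
    obtain ⟨A, B, C⟩ := h
    rw [C, A, B]
    exact grp_aux _ _ _ _ _ _ (hRel i) (hT i) (hT (rhoMap g i))
  rcases hcase with h0 | h0
  · -- i even
    have hi : i.val % 2 = 0 := (hpar i).mpr h0
    have hm1 : ¬((i-1).val % 2 = 0) := by
      rw [hpar, map_sub, map_one, h0]; decide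
    have r1 : rhoMap g i = 2 - i + 1 := by
      rw [rhoMap, sigmaMap, if_pos hi]
    have hr1 : ¬((2 - i + 1).val % 2 = 0) := by
      rw [hpar, map_add, map_sub, map_one, map_ofNat, h0]; decide
    have r2 : rhoMap g (rhoMap g i) = 4*(g : ZMod (8*g-4)) - (2 - i + 1) + 1 := by
      rw [rhoMap, r1, sigmaMap, if_neg hr1]
    have hr2 : (4*(g : ZMod (8*g-4)) - (2 - i + 1) + 1).val % 2 = 0 := by
      rw [hpar, map_add, map_sub, map_add, map_sub, map_one, map_ofNat, hfg, h0]; decide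
    have r3 : rhoMap g (rhoMap g (rhoMap g i)) =
        2 - (4*(g : ZMod (8*g-4)) - (2 - i + 1) + 1) + 1 := by
      rw [rhoMap, r2, sigmaMap, if_pos hr2]
    refine ⟨?_, ?_, ?_⟩
    · rw [r3, sigmaMap, if_neg hm1]; linear_combination h8
    · rw [r2, tauMap]; ring
    · rw [r1, sigmaMap, if_neg hr1, tauMap]; ring
  · -- i odd
    have hi : ¬(i.val % 2 = 0) := by rw [hpar, h0]; decide
    have hm1 : (i-1).val % 2 = 0 := by
      rw [hpar, map_sub, map_one, h0]; decide
    have r1 : rhoMap g i = 4*(g : ZMod (8*g-4)) - i + 1 := by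
      rw [rhoMap, sigmaMap, if_neg hi]
    have hr1 : (4*(g : ZMod (8*g-4)) - i + 1).val % 2 = 0 := by
      rw [hpar, map_add, map_sub, map_one, hfg, h0]; decide
    have r2 : rhoMap g (rhoMap g i) = 2 - (4*(g : ZMod (8*g-4)) - i + 1) + 1 := by
      rw [rhoMap, r1, sigmaMap, if_pos hr1]
    have hr2 : ¬((2 - (4*(g : ZMod (8*g-4)) - i + 1) + 1).val % 2 = 0) := by
      rw [hpar, map_add, map_sub, map_add, map_sub, map_one, map_ofNat, hfg, h0]; decide
    have r3 : rhoMap g (rhoMap g (rhoMap g i)) =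
        4*(g : ZMod (8*g-4)) - (2 - (4*(g : ZMod (8*g-4)) - i + 1) + 1) + 1 := by
      rw [rhoMap, r2, sigmaMap, if_neg hr2]
    refine ⟨?_, ?_, ?_⟩
    · rw [r3, sigmaMap, if_pos hm1]; linear_combination -h8
    · rw [r2, tauMap]; linear_combination h8
    · rw [r1, sigmaMap, if_pos hr1, tauMap]; linear_combination h8
end
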